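/- arXiv:2401.10527 — 2 statements merged into one kernel-verified Lean document; each statement's English description precedes it below -/
import Mathlib

section
/- Let U be the syndrome table afforded by e and τ, with ω(e) ≤ t, 1 ≤ t ≤ ⌊r₁/2⌋ and t ≤ ⌊r₂/2⌋. Let l = (l₁, l₂) ∈ ℕ×ℕ with l₁ ≠ 0, l₂ ≠ 0 and l₁ + l₂ > t, and let F be a minimal set of polynomials for u^l. Then f[U]_l = 0 for every f ∈ F. -/
/-- A monomial order on `ℕ × ℕ`: a linear well-order compatible with addition that
refines the componentwise partial order. -/
structure MonomialOrder2 where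
  le : ℕ × ℕ → ℕ × ℕ → Prop
  le_refl : ∀ a, le a a
  le_trans : ∀ a b c, le a b → le b c → le a c
  le_antisymm : ∀ a b, le a b → le b a → a = b
  le_total : ∀ a b, le a b ∨ le b a
  wf : WellFounded (fun a b : ℕ × ℕ => le a b ∧ a ≠ b)
  add_right : ∀ a b k, le a b → le (a + k) (b + k)
  refines : ∀ a b : ℕ × ℕ, a.1 ≤ b.1 → a.2 ≤ b.2 → le a b

/-- Strict version of the monomial order. -/
def MonomialOrder2.lt (T : MonomialOrder2) (a b : ℕ × ℕ) : Prop :=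
  T.le a b ∧ a ≠ b

section Defs

variable {L : Type*} [Field L]

/-- `IsLP T f s` says `s` is the leading power product exponent of `f` w.r.t. `T`. -/
def IsLP (T : MonomialOrder2) (f : AddMonoidAlgebra L (ℕ × ℕ)) (s : ℕ × ℕ) : Prop :=
  s ∈ f.coeff.support ∧ ∀ m ∈ f.coeff.support, T.le m s

/-- `recEval U f s n` is `f[U]_n`, where `s` is the leading power product exponent of `f`. -/
noncomputable def recEval (U : ℕ × ℕ → L) (f : AddMonoidAlgebra L (ℕ × ℕ))
    (s n : ℕ × ℕ) : L :=
  if s.1 ≤ n.1 ∧ s.2 ≤ n.2 then ∑ m ∈ f.coeff.support, f.coeff m * U (m + n - s) else 0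

/-- `Lambda T U l` is `Λ(u^l)`, the set of nonzero polynomials valid at all
`n` with `LP f ⪯ n` and `n <_T l`. -/
def Lambda (T : MonomialOrder2) (U : ℕ × ℕ → L) (l : ℕ × ℕ) :
    Set (AddMonoidAlgebra L (ℕ × ℕ)) :=
  { f | f ≠ 0 ∧ ∀ s n : ℕ × ℕ, IsLP T f s → s.1 ≤ n.1 → s.2 ≤ n.2 → T.lt n l →
      recEval U f s n = 0 }

/-- `𝔏(U)`: nonzero polynomials generating the whole array `U`. -/
def LambdaU (T : MonomialOrder2) (U : ℕ × ℕ → L) :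
    Set (AddMonoidAlgebra L (ℕ × ℕ)) :=
  { f | f ≠ 0 ∧ ∀ (s n : ℕ × ℕ), IsLP T f s → recEval U f s n = 0 }

/-- The footprint `Δ(U)` of the ideal of linear recurring relations of `U`. -/
def footprint (T : MonomialOrder2) (U : ℕ × ℕ → L) : Set (ℕ × ℕ) :=
  { n | ∀ f s, f ∈ LambdaU T U → IsLP T f s → ¬(s.1 ≤ n.1 ∧ s.2 ≤ n.2) }

/-- A doubly periodic array of period `r₁ × r₂`. -/
def DoublyPeriodic (r₁ r₂ : ℕ) (U : ℕ × ℕ → L) : Prop :=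
  ∀ n m : ℕ × ℕ, n.1 % r₁ = m.1 % r₁ → n.2 % r₂ = m.2 % r₂ → U n = U m

/-- Evaluation of a bivariate polynomial with coefficients in `L` at `(x, y)`. -/
noncomputable def evalAtL (f : AddMonoidAlgebra L (ℕ × ℕ)) (x y : L) : L :=
  ∑ m ∈ f.coeff.support, f.coeff m * x ^ m.1 * y ^ m.2

end Defs

/-- Evaluation of a bivariate polynomial with coefficients in `F` at a point of `L`. -/
noncomputable def evalAt {F L : Type*} [Field F] [Field L] [Algebra F L]
    (e : AddMonoidAlgebra F (ℕ × ℕ)) (x y : L) : L :=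
  ∑ s ∈ e.coeff.support, algebraMap F L (e.coeff s) * x ^ s.1 * y ^ s.2

/-- The index box `I = {0,…,r₁−1} × {0,…,r₂−1}`. -/
def Ibox (r₁ r₂ : ℕ) : Set (ℕ × ℕ) := { p | p.1 < r₁ ∧ p.2 < r₂ }

/-- `s^(1),…,s^(d)` (0-indexed: `s 0, …, s (d-1)`) is a sequence of defining points. -/
def IsDefPoints (d : ℕ) (s : ℕ → ℕ × ℕ) : Prop :=
  0 < d ∧ (∀ i j, i < j → j < d → (s j).1 < (s i).1) ∧
    (∀ i j, i < j → j < d → (s i).2 < (s j).2) ∧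
    (s (d - 1)).1 = 0 ∧ (s 0).2 = 0

/-- The delta-set of a sequence of defining points. -/
def deltaSet (d : ℕ) (s : ℕ → ℕ × ℕ) : Set (ℕ × ℕ) :=
  { m | ∃ i, i + 1 < d ∧ m.1 + 1 ≤ (s i).1 ∧ m.2 + 1 ≤ (s (i + 1)).2 }

/-- `IsMinimalSet T U l d s f`: `{f 0, …, f (d-1)}` is a minimal set of polynomials
for `u^l`, with defining points `s 0, …, s (d-1)`. -/
def IsMinimalSet {L : Type*} [Field L] (T : MonomialOrder2) (U : ℕ × ℕ → L) (l : ℕ × ℕ)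
    (d : ℕ) (s : ℕ → ℕ × ℕ) (f : ℕ → AddMonoidAlgebra L (ℕ × ℕ)) : Prop :=
  IsDefPoints d s ∧
    (∀ i, i < d → f i ∈ Lambda T U l ∧ IsLP T (f i) (s i)) ∧
    (∀ g sg, IsLP T g sg → sg ∈ deltaSet d s → g ∉ Lambda T U l)

/-- The set of indexes `𝒮(t)`. -/
def Sset (t : ℕ) : Set (ℕ × ℕ) :=
  { p | (p.1 = 0 ∧ p.2 ≤ 2 * t - 1) ∨ (p.2 = 0 ∧ p.1 ≤ 2 * t - 1) ∨
      (1 ≤ p.1 ∧ 1 ≤ p.2 ∧ p.1 + p.2 ≤ t) }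

/-!
If `f[U]_l ≠ 0` for `f = f⁽ⁱ⁾` with `s = LP f`, then `s ⪯ l`. The set `{m ≺ s} ∪ {m ⪯ l - s}`
has at least `l₁ + l₂ > t ≥ ω(e)` elements, so a nonzero `g` supported on it vanishes at the
`ω(e)` points `α̅^p`, `p ∈ supp e`. As `U` is a sum of exponentials in exactly these points, `g`
is a recurrence valid on the whole array. Its leading exponent `w` is either `≺ s`, hence in
`Δ(F)`, contradicting minimality, or satisfies `s + w ⪯ l`, and then commuting the two
recurrences shows `f[U]_l = 0`.
-/

open Finset

lemma card_Iic_prod_nat (n : ℕ × ℕ) : #(Iic n) = (n.1 + 1) * (n.2 + 1) := by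
  rw [card_Iic_prod, Nat.card_Iic, Nat.card_Iic]

lemma add_le_card_Iio_union_Iic {s n : ℕ × ℕ} (h₁ : 0 < s.1 + n.1) (h₂ : 0 < s.2 + n.2) :
    s.1 + s.2 + n.1 + n.2 ≤ #(Iio s ∪ Iic n) := by
  by_cases hsn : s ≤ n
  · rw [union_eq_right.2 (Iio_subset_Iic_self.trans (Iic_subset_Iic.2 hsn)), card_Iic_prod_nat]
    obtain ⟨hsn₁, hsn₂⟩ := Prod.le_def.1 hsn
    have : 1 ≤ n.1 := by omega
    have : 1 ≤ n.2 := by omega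
    nlinarith
  · have hunion := card_union_add_card_inter (Iio s) (Iic n)
    have hinter : #(Iio s ∩ Iic n) ≤ #(Iic (s ⊓ n)) :=
      card_le_card fun m hm => by
        simp only [mem_inter, mem_Iio, mem_Iic] at hm
        exact mem_Iic.2 (le_inf hm.1.le hm.2)
    have hIio : #(Iio s) + 1 = #(Iic s) := by
      rw [← Iio_insert, card_insert_of_notMem notMem_Iio_self]
    rw [card_Iic_prod_nat] at hIio hinter hunion
    simp only [Prod.fst_inf, Prod.snd_inf] at hinter
    rw [Prod.le_def, not_and_or, not_le, not_le] at hsn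
    rcases le_total s.1 n.1 with h | h <;> rcases le_total s.2 n.2 with h' | h' <;>
      simp only [min_eq_left, min_eq_right, h, h'] at hinter
    · omega
    · have : 1 ≤ n.1 := by omega
      nlinarith [Nat.mul_le_mul_left s.1 (show n.2 + 1 ≤ s.2 by omega)]
    · have : 1 ≤ n.2 := by omega
      nlinarith [Nat.mul_le_mul_left s.2 (show n.1 + 1 ≤ s.1 by omega)]
    · rcases hsn with hlt | hlt
      · nlinarith [Nat.mul_le_mul_right s.2 hlt, show 1 ≤ s.2 by omega]
      · nlinarith [Nat.mul_le_mul_left s.1 hlt, show 1 ≤ s.1 by omega]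

section LinearAlgebra

variable {L : Type*} [Field L]

lemma exists_evalAtL_eq_zero_of_card_lt {ι : Type*} (P : Finset ι) (x y : ι → L)
    (S : Finset (ℕ × ℕ)) (hPS : #P < #S) :
    ∃ g : AddMonoidAlgebra L (ℕ × ℕ), g ≠ 0 ∧ g.coeff.support ⊆ S ∧
      ∀ p ∈ P, evalAtL g (x p) (y p) = 0 := by
  let φ : Finsupp.supported L L (S : Set (ℕ × ℕ)) →ₗ[L] (P → L) :=
    (LinearMap.pi fun p : P => Finsupp.linearCombination L fun m : ℕ × ℕ =>
      x p ^ m.1 * y p ^ m.2).comp (Finsupp.supported L L (S : Set (ℕ × ℕ))).subtype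
  have : FiniteDimensional L (Finsupp.supported L L (S : Set (ℕ × ℕ))) :=
    .equiv (Finsupp.supportedEquivFinsupp _).symm
  have hker : LinearMap.ker φ ≠ ⊥ := by
    refine LinearMap.ker_ne_bot_of_finrank_lt (V := Finsupp.supported L L (S : Set (ℕ × ℕ))) ?_
    rw [(Finsupp.supportedEquivFinsupp (S : Set (ℕ × ℕ))).finrank_eq,
      Module.finrank_finsupp_self, Module.finrank_fintype_fun_eq_card]
    simpa using hPS
  obtain ⟨v, hv, hv0⟩ := Submodule.exists_mem_ne_zero_of_ne_bot hker
  refine ⟨AddMonoidAlgebra.ofCoeff v, fun h => hv0 ?_, (Finsupp.mem_supported L _).1 v.2, ?_⟩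
  · ext1
    simpa using congrArg AddMonoidAlgebra.coeff h
  · intro p hp
    have := congrFun (LinearMap.mem_ker.1 hv) ⟨p, hp⟩
    simpa [φ, evalAtL, Finsupp.linearCombination_apply, Finsupp.sum, mul_assoc] using this

end LinearAlgebra

namespace MonomialOrder2

variable (T : MonomialOrder2)

lemma lt_add_right {a b : ℕ × ℕ} (h : T.lt a b) (k : ℕ × ℕ) : T.lt (a + k) (b + k) :=
  ⟨T.add_right a b k h.1, fun hab => h.2 (add_right_cancel hab)⟩

lemma exists_forall_le_of_nonempty {A : Finset (ℕ × ℕ)} (hA : A.Nonempty) :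
    ∃ w ∈ A, ∀ m ∈ A, T.le m w := by
  induction hA using Finset.Nonempty.cons_induction with
  | singleton a => exact ⟨a, mem_singleton_self a, fun m hm => mem_singleton.1 hm ▸ T.le_refl a⟩
  | cons a A _ _ ih =>
    obtain ⟨w, hw, hmax⟩ := ih
    rcases T.le_total a w with haw | hwa
    · exact ⟨w, mem_cons_of_mem hw, fun m hm => (mem_cons.1 hm).elim (· ▸ haw) (hmax m)⟩
    · exact ⟨a, mem_cons_self a A, fun m hm =>
        (mem_cons.1 hm).elim (· ▸ T.le_refl a) fun hm => T.le_trans _ _ _ (hmax m hm) hwa⟩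

lemma exists_isLP {L : Type*} [Field L] {f : AddMonoidAlgebra L (ℕ × ℕ)} (hf : f ≠ 0) :
    ∃ s, IsLP T f s :=
  T.exists_forall_le_of_nonempty
    (Finsupp.support_nonempty_iff.2 (mt AddMonoidAlgebra.coeff_eq_zero.1 hf))

end MonomialOrder2

section Recurrence

variable {L : Type*} [Field L] {T : MonomialOrder2} {U : ℕ × ℕ → L}
  {f g : AddMonoidAlgebra L (ℕ × ℕ)}

lemma le_of_recEval_ne_zero {s n : ℕ × ℕ} (h : recEval U f s n ≠ 0) : s ≤ n := by
  by_contra hsn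
  exact h (if_neg (by rwa [Prod.le_def] at hsn))

lemma recEval_of_le {s n : ℕ × ℕ} (hsn : s ≤ n) :
    recEval U f s n = ∑ m ∈ f.coeff.support, f.coeff m * U (m + (n - s)) := by
  simp only [recEval, if_pos (Prod.le_def.1 hsn), add_tsub_assoc_of_le hsn]

lemma LambdaU_subset_Lambda (l : ℕ × ℕ) : LambdaU T U ⊆ Lambda T U l :=
  fun _ hg => ⟨hg.1, fun s n hs _ _ _ => hg.2 s n hs⟩

lemma sum_coeff_mul_recEval_comm {s w n : ℕ × ℕ} (h : s + w ≤ n) :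
    ∑ m ∈ g.coeff.support, g.coeff m * recEval U f s (m + (n - w)) =
      ∑ k ∈ f.coeff.support, f.coeff k * recEval U g w (k + (n - s)) := by
  simp only [recEval_of_le ((le_tsub_of_add_le_right h).trans le_add_self),
    recEval_of_le ((le_tsub_of_add_le_left h).trans le_add_self), mul_sum]
  rw [sum_comm]
  refine sum_congr rfl fun k _ => sum_congr rfl fun m _ => ?_
  rw [mul_left_comm, add_tsub_assoc_of_le (le_tsub_of_add_le_right h),
    add_tsub_assoc_of_le (le_tsub_of_add_le_left h), tsub_right_comm, add_left_comm]

/-- In `sum_coeff_mul_recEval_comm` with `n = l`, every term on the right vanishes because `g`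
is valid everywhere, while on the left only `m = w` survives: for `m <_T w` the point
`m + (l - w)` is `<_T l`, where `f` is valid. -/
lemma recEval_eq_zero_of_mem_LambdaU {l s w : ℕ × ℕ} (hf : f ∈ Lambda T U l) (hs : IsLP T f s)
    (hg : g ∈ LambdaU T U) (hw : IsLP T g w) (hsw : s + w ≤ l) : recEval U f s l = 0 := by
  have hwl : w ≤ l := le_add_self.trans hsw
  have hsl : s ≤ l - w := le_tsub_of_add_le_right hsw
  have hright : ∑ k ∈ f.coeff.support, f.coeff k * recEval U g w (k + (l - s)) = 0 :=
    sum_eq_zero fun k _ => by rw [hg.2 w _ hw, mul_zero]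
  have hleft : ∑ m ∈ g.coeff.support, g.coeff m * recEval U f s (m + (l - w)) =
      g.coeff w * recEval U f s l := by
    rw [sum_eq_single w, add_tsub_cancel_of_le hwl]
    · intro m hm hmw
      have hle : s ≤ m + (l - w) := hsl.trans le_add_self
      have hlt : T.lt (m + (l - w)) l := by
        simpa [add_tsub_cancel_of_le hwl] using T.lt_add_right ⟨hw.2 m hm, hmw⟩ (l - w)
      rw [hf.2 s _ hs (Prod.le_def.1 hle).1 (Prod.le_def.1 hle).2 hlt, mul_zero]
    · exact fun hw' => absurd hw.1 hw'
  have hcomm := sum_coeff_mul_recEval_comm (U := U) (f := f) (g := g) hsw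
  rw [hleft, hright] at hcomm
  exact (mul_eq_zero.1 hcomm).resolve_left (Finsupp.mem_support_iff.1 hw.1)

lemma sum_coeff_mul_add_eq_zero {ι : Type*} (P : Finset ι) (c x y : ι → L)
    (hU : ∀ n, U n = ∑ p ∈ P, c p * x p ^ n.1 * y p ^ n.2)
    (hg : ∀ p ∈ P, evalAtL g (x p) (y p) = 0) (k : ℕ × ℕ) :
    ∑ m ∈ g.coeff.support, g.coeff m * U (m + k) = 0 := by
  simp only [hU, mul_sum]
  rw [sum_comm]
  refine sum_eq_zero fun p hp => ?_
  have := congrArg (c p * x p ^ k.1 * y p ^ k.2 * ·) (hg p hp)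
  simp only [evalAtL, mul_sum, mul_zero] at this
  rw [← this]
  refine sum_congr rfl fun m _ => ?_
  simp only [Prod.fst_add, Prod.snd_add, pow_add]
  ring

lemma mem_LambdaU_of_evalAtL_eq_zero {ι : Type*} (P : Finset ι) (c x y : ι → L)
    (hU : ∀ n, U n = ∑ p ∈ P, c p * x p ^ n.1 * y p ^ n.2)
    (hg : ∀ p ∈ P, evalAtL g (x p) (y p) = 0) (hg0 : g ≠ 0) : g ∈ LambdaU T U := by
  refine ⟨hg0, fun w n _ => ?_⟩
  by_contra h
  rw [recEval_of_le (le_of_recEval_ne_zero h)] at h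
  exact h (sum_coeff_mul_add_eq_zero P c x y hU hg _)

end Recurrence

lemma evalAt_pow_add {F L : Type*} [Field F] [Field L] [Algebra F L]
    (e : AddMonoidAlgebra F (ℕ × ℕ)) (x y : L) (a b : ℕ) (n : ℕ × ℕ) :
    evalAt e (x ^ (a + n.1)) (y ^ (b + n.2)) = ∑ p ∈ e.coeff.support,
      algebraMap F L (e.coeff p) * x ^ (a * p.1) * y ^ (b * p.2) * (x ^ p.1) ^ n.1 *
        (y ^ p.2) ^ n.2 :=
  sum_congr rfl fun _ _ => by ring

lemma mem_deltaSet_of_lt {d : ℕ} {s : ℕ → ℕ × ℕ} (hs : IsDefPoints d s) {i : ℕ} (hi : i < d)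
    {m : ℕ × ℕ} (hm : m < s i) : m ∈ deltaSet d s := by
  obtain ⟨-, hfst, hsnd, hlast, hfirst⟩ := hs
  rcases Prod.lt_iff.1 hm with ⟨h₁, h₂⟩ | ⟨h₁, h₂⟩
  · have hi' : i + 1 < d := by
      by_contra!
      rw [show i = d - 1 by omega, hlast] at h₁
      omega
    exact ⟨i, hi', h₁, h₂.trans_lt (hsnd i (i + 1) i.lt_succ_self hi')⟩
  · have hi0 : i ≠ 0 := by
      rintro rfl
      rw [hfirst] at h₂
      omega
    refine ⟨i - 1, by omega, ?_, by rwa [Nat.sub_add_cancel (Nat.pos_of_ne_zero hi0)]⟩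
    exact h₁.trans_lt (hfst (i - 1) i (by omega) hi)

theorem stmt_11_general (T : MonomialOrder2) {F L : Type*} [Field F] [Field L] [Algebra F L] (t : ℕ)
    (α₁ α₂ : L) (e : AddMonoidAlgebra F (ℕ × ℕ)) (hω : e.coeff.support.card ≤ t)
    (τ : ℕ × ℕ) (U : ℕ × ℕ → L)
    (hU : ∀ n : ℕ × ℕ, U n = evalAt e (α₁ ^ (τ.1 + n.1)) (α₂ ^ (τ.2 + n.2)))
    (l : ℕ × ℕ) (hl1 : l.1 ≠ 0) (hl2 : l.2 ≠ 0) (hlt : t < l.1 + l.2)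
    (d : ℕ) (s : ℕ → ℕ × ℕ) (f : ℕ → AddMonoidAlgebra L (ℕ × ℕ))
    (hmin : IsMinimalSet T U l d s f) :
    ∀ i, i < d → recEval U (f i) (s i) l = 0 := by
  intro i hi
  obtain ⟨hdef, hmem, hminimal⟩ := hmin
  obtain ⟨hfi, hLPi⟩ := hmem i hi
  by_contra hc
  have hsl : s i ≤ l := le_of_recEval_ne_zero hc
  have hcard : #e.coeff.support < #(Iio (s i) ∪ Iic (l - s i)) := by
    have := add_le_card_Iio_union_Iic (s := s i) (n := l - s i)
      (by simp only [Prod.fst_sub]; omega) (by simp only [Prod.snd_sub]; omega)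
    simp only [Prod.fst_sub, Prod.snd_sub] at this
    have := Prod.le_def.1 hsl
    omega
  obtain ⟨g, hg0, hgS, hgvan⟩ := exists_evalAtL_eq_zero_of_card_lt e.coeff.support
    (fun p => α₁ ^ p.1) (fun p => α₂ ^ p.2) _ hcard
  have hg : g ∈ LambdaU T U :=
    mem_LambdaU_of_evalAtL_eq_zero _ _ _ _ (fun n => (hU n).trans (evalAt_pow_add ..)) hgvan hg0
  obtain ⟨w, hw⟩ := T.exists_isLP hg0
  rcases mem_union.1 (hgS hw.1) with hws | hwl
  · exact hminimal g w hw (mem_deltaSet_of_lt hdef hi (mem_Iio.1 hws)) (LambdaU_subset_Lambda l hg)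
  · exact hc (recEval_eq_zero_of_mem_LambdaU hfi hLPi hg hw
      ((le_tsub_iff_left hsl).1 (mem_Iic.1 hwl)))

/-- if `l₁ ≠ 0`, `l₂ ≠ 0` and `l₁ + l₂ > t`, then `f[U]_l = 0`
for every `f` in a minimal set for `u^l`. -/
theorem stmt_11 (T : MonomialOrder2) {F L : Type*} [Field F] [Fintype F] [Field L]
    [Algebra F L] (r₁ r₂ t : ℕ) (ht : 1 ≤ t) (ht₁ : t ≤ r₁ / 2) (ht₂ : t ≤ r₂ / 2)
    (hq : Nat.Coprime (r₁ * r₂) (Fintype.card F))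
    (α₁ α₂ : L) (hα₁ : IsPrimitiveRoot α₁ r₁) (hα₂ : IsPrimitiveRoot α₂ r₂)
    (e : AddMonoidAlgebra F (ℕ × ℕ)) (he : ↑e.coeff.support ⊆ Ibox r₁ r₂)
    (hω : e.coeff.support.card ≤ t)
    (τ : ℕ × ℕ) (hτ : τ ∈ Ibox r₁ r₂) (U : ℕ × ℕ → L)
    (hU : ∀ n : ℕ × ℕ, U n = evalAt e (α₁ ^ (τ.1 + n.1)) (α₂ ^ (τ.2 + n.2)))
    (l : ℕ × ℕ) (hl1 : l.1 ≠ 0) (hl2 : l.2 ≠ 0) (hlt : t < l.1 + l.2)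
    (d : ℕ) (s : ℕ → ℕ × ℕ) (f : ℕ → AddMonoidAlgebra L (ℕ × ℕ))
    (hmin : IsMinimalSet T U l d s f) :
    ∀ i, i < d → recEval U (f i) (s i) l = 0 :=
  stmt_11_general T t α₁ α₂ e hω τ U hU l hl1 hl2 hlt d s f hmin
end

section
/- Let L be a field, r₁, r₂ positive integers, U : ℕ×ℕ → L a doubly periodic array of period r₁×r₂, and l ∈ ℕ×ℕ. If F is a minimal set of polynomials for u^l, then there exists a minimal set of polynomials F' for u^l with the same leading exponents (LP(F') = LP(F), hence the same delta-set Δ) such that for every f ∈ F' and every m ∈ supp(f) with m ≠ LP(f), one has m ∈ Δ. -/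
/-!
If a non-leading exponent `m` of `g ∈ Λ(u^l)` lies outside `Δ`, then `s^(j) ⪯ m` for some
defining point, and subtracting a scalar multiple of `X^(m - s^(j)) f^(j)` kills the monomial
`X^m`. That multiple has leading exponent `m <_T LP(g)`, so the difference keeps the leading
exponent of `g`, and it stays in `Λ(u^l)`: the relation `f^(j)`, shifted by `m - s^(j)`, is only
needed at points `≤_T` those where `g` is. The new exponents are all `<_T m`, so repeating this
terminates by well-foundedness of `≤_T`. Minimality depends only on the defining points.
-/

namespace MonomialOrder2

variable (T : MonomialOrder2)

theorem lt_of_le_of_lt {a b c : ℕ × ℕ} (hab : T.le a b) (hbc : T.lt b c) : T.lt a c :=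
  ⟨T.le_trans _ _ _ hab hbc.1, fun hac => hbc.2 (T.le_antisymm _ _ hbc.1 (hac ▸ hab))⟩

theorem exists_max {B : Finset (ℕ × ℕ)} (hB : B.Nonempty) : ∃ m ∈ B, ∀ p ∈ B, T.le p m := by
  induction hB using Finset.Nonempty.cons_induction with
  | singleton a => exact ⟨a, Finset.mem_singleton_self a, by simp [T.le_refl]⟩
  | cons a B ha _ ih =>
    obtain ⟨m, hm, hmax⟩ := ih
    rcases T.le_total a m with ham | hma
    · exact ⟨m, Finset.mem_cons_of_mem hm, (Finset.forall_mem_cons ha _).2 ⟨ham, hmax⟩⟩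
    · exact ⟨a, Finset.mem_cons_self a B, (Finset.forall_mem_cons ha _).2
        ⟨T.le_refl a, fun p hp => T.le_trans _ _ _ (hmax p hp) hma⟩⟩

end MonomialOrder2

theorem IsDefPoints.exists_le_of_notMem_deltaSet {d : ℕ} {s : ℕ → ℕ × ℕ} (hs : IsDefPoints d s)
    {m : ℕ × ℕ} (hm : m ∉ deltaSet d s) : ∃ i < d, s i ≤ m := by
  classical
  obtain ⟨hd, -, -, hlast, hfirst⟩ := hs
  set i := Nat.findGreatest (fun j => (s j).2 ≤ m.2) (d - 1)
  have hi₂ : (s i).2 ≤ m.2 :=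
    Nat.findGreatest_spec (P := fun j => (s j).2 ≤ m.2) (Nat.zero_le _) (by simp [hfirst])
  have hid : i ≤ d - 1 := Nat.findGreatest_le _
  refine ⟨i, by omega, Prod.mk_le_mk.2 ⟨?_, hi₂⟩⟩
  rcases eq_or_lt_of_le hid with hi | hi
  · simp [hi, hlast]
  · have hnext : ¬(s (i + 1)).2 ≤ m.2 :=
      Nat.findGreatest_is_greatest (P := fun j => (s j).2 ≤ m.2) (n := d - 1)
        (Nat.lt_succ_self i) (by omega)
    by_contra hi₁
    exact hm ⟨i, by omega, by omega, by omega⟩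

section Recurrence

variable {L : Type*} [Field L] (U : ℕ × ℕ → L)

noncomputable def shiftEval (f : AddMonoidAlgebra L (ℕ × ℕ)) (t : ℕ × ℕ) : L :=
  Finsupp.linearCombination L (fun p => U (p + t)) f.coeff

theorem shiftEval_sub (f g : AddMonoidAlgebra L (ℕ × ℕ)) (t : ℕ × ℕ) :
    shiftEval U (f - g) t = shiftEval U f t - shiftEval U g t :=
  map_sub _ _ _

theorem shiftEval_single_mul (k : ℕ × ℕ) (c : L) (h : AddMonoidAlgebra L (ℕ × ℕ)) (t : ℕ × ℕ) :
    shiftEval U (AddMonoidAlgebra.single k c * h) t = c * shiftEval U h (k + t) := by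
  simp only [shiftEval, AddMonoidAlgebra.mul_def, AddMonoidAlgebra.coeff_single,
    AddMonoidAlgebra.coeff_finsuppSum, map_finsuppSum, Finsupp.linearCombination_apply]
  rw [Finsupp.sum_single_index (by simp), Finsupp.mul_sum]
  refine Finsupp.sum_congr fun q _ => ?_
  rw [Finsupp.sum_single_index (by simp), smul_eq_mul, smul_eq_mul, mul_assoc,
    add_comm k q, add_assoc]

theorem recEval_add (f : AddMonoidAlgebra L (ℕ × ℕ)) (s t : ℕ × ℕ) :
    recEval U f s (s + t) = shiftEval U f t := by
  simp [recEval, shiftEval, Finsupp.linearCombination_apply, Finsupp.sum, add_left_comm _ s t]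

theorem IsLP.unique {T : MonomialOrder2} {f : AddMonoidAlgebra L (ℕ × ℕ)} {s s' : ℕ × ℕ}
    (hs : IsLP T f s) (hs' : IsLP T f s') : s = s' :=
  T.le_antisymm _ _ (hs'.2 s hs.1) (hs.2 s' hs'.1)

theorem IsLP.le_of_mem_support_single_mul {T : MonomialOrder2} {h : AddMonoidAlgebra L (ℕ × ℕ)}
    {s : ℕ × ℕ} (hs : IsLP T h s) (k : ℕ × ℕ) (c : L) {p : ℕ × ℕ}
    (hp : p ∈ (AddMonoidAlgebra.single k c * h).coeff.support) : T.le p (s + k) := by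
  classical
  obtain ⟨q, hq, rfl⟩ :=
    Finset.mem_image.1 (AddMonoidAlgebra.support_coeff_single_mul_subset h c k hp)
  simpa only [add_comm k] using T.add_right _ _ k (hs.2 q hq)

variable {U} (T : MonomialOrder2) {l : ℕ × ℕ}

theorem mem_Lambda_iff {f : AddMonoidAlgebra L (ℕ × ℕ)} {s : ℕ × ℕ} (hs : IsLP T f s) :
    f ∈ Lambda T U l ↔ f ≠ 0 ∧ ∀ t, T.lt (s + t) l → shiftEval U f t = 0 := by
  refine and_congr_right fun _ => ⟨fun hf t ht => ?_, fun hf s' n hs' hn₁ hn₂ hn => ?_⟩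
  · rw [← recEval_add]
    exact hf s (s + t) hs (by simp) (by simp) ht
  · obtain rfl := hs.unique hs'
    obtain ⟨t, rfl⟩ := exists_add_of_le (Prod.le_def.2 ⟨hn₁, hn₂⟩)
    rw [recEval_add]
    exact hf t hn

theorem sub_single_mul_mem_Lambda {g h : AddMonoidAlgebra L (ℕ × ℕ)} {s s' k : ℕ × ℕ} (c : L)
    (hg : g ∈ Lambda T U l) (hgs : IsLP T g s) (hh : h ∈ Lambda T U l) (hhs : IsLP T h s')
    (hle : T.le (s' + k) s) (hs : IsLP T (g - AddMonoidAlgebra.single k c * h) s) :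
    g - AddMonoidAlgebra.single k c * h ∈ Lambda T U l := by
  refine (mem_Lambda_iff T hs).2 ⟨fun h0 => by simp [h0, IsLP] at hs, fun t ht => ?_⟩
  have hht : T.lt (s' + (k + t)) l := by
    rw [← add_assoc]
    exact T.lt_of_le_of_lt (T.add_right _ _ t hle) ht
  rw [shiftEval_sub, shiftEval_single_mul, ((mem_Lambda_iff T hgs).1 hg).2 t ht,
    ((mem_Lambda_iff T hhs).1 hh).2 _ hht, mul_zero, sub_zero]

theorem exists_eliminate {g h : AddMonoidAlgebra L (ℕ × ℕ)} {s s' m : ℕ × ℕ}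
    (hg : g ∈ Lambda T U l) (hgs : IsLP T g s) (hh : h ∈ Lambda T U l) (hhs : IsLP T h s')
    (hm : m ∈ g.coeff.support) (hms : m ≠ s) (hs'm : s' ≤ m) :
    ∃ g₁ ∈ Lambda T U l, IsLP T g₁ s ∧
      ∀ p ∈ g₁.coeff.support, p ≠ m ∧ (p ∈ g.coeff.support ∨ T.lt p m) := by
  obtain ⟨k, rfl⟩ := exists_add_of_le hs'm
  set G := AddMonoidAlgebra.single k (g.coeff (s' + k) / h.coeff s') * h
  have hGle : ∀ p ∈ G.coeff.support, T.le p (s' + k) := fun p hp =>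
    hhs.le_of_mem_support_single_mul k _ hp
  have hGm : G.coeff (s' + k) = g.coeff (s' + k) := by
    have := AddMonoidAlgebra.coeff_single_mul_add h (g.coeff (s' + k) / h.coeff s') k s'
    rwa [add_comm k s', div_mul_cancel₀ _ (Finsupp.mem_support_iff.1 hhs.1)] at this
  have hmlt : T.lt (s' + k) s := ⟨hgs.2 _ hm, hms⟩
  have hGs : G.coeff s = 0 := Finsupp.notMem_support_iff.1 fun hs =>
    hms (T.le_antisymm _ _ hmlt.1 (hGle s hs))
  have hsupp : ∀ p ∈ (g - G).coeff.support, p ∈ g.coeff.support ∨ p ∈ G.coeff.support :=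
    fun p hp => Finset.mem_union.1 (Finsupp.support_sub hp)
  have hg₁s : IsLP T (g - G) s := by
    refine ⟨by simpa [AddMonoidAlgebra.coeff_sub, hGs] using hgs.1, fun p hp => ?_⟩
    rcases hsupp p hp with hp | hp
    · exact hgs.2 p hp
    · exact T.le_trans _ _ _ (hGle p hp) hmlt.1
  refine ⟨g - G, sub_single_mul_mem_Lambda T _ hg hgs hh hhs hmlt.1 hg₁s, hg₁s, fun p hp => ?_⟩
  have hpm : p ≠ s' + k := by
    rintro rfl
    simp [AddMonoidAlgebra.coeff_sub, hGm] at hp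
  exact ⟨hpm, (hsupp p hp).imp id fun hp => ⟨hGle p hp, hpm⟩⟩

theorem exists_reduced_of_forall_lt {d : ℕ} {s : ℕ → ℕ × ℕ} (hs : IsDefPoints d s)
    {f : ℕ → AddMonoidAlgebra L (ℕ × ℕ)} (hf : ∀ j < d, f j ∈ Lambda T U l ∧ IsLP T (f j) (s j))
    (s₀ M : ℕ × ℕ) :
    ∀ g ∈ Lambda T U l, IsLP T g s₀ →
      (∀ p ∈ g.coeff.support, p ≠ s₀ → p ∉ deltaSet d s → T.lt p M) →
      ∃ g' ∈ Lambda T U l, IsLP T g' s₀ ∧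
        ∀ p ∈ g'.coeff.support, p ≠ s₀ → p ∈ deltaSet d s := by
  classical
  induction M using T.wf.induction with
  | _ M ih =>
  intro g hg hgs hbound
  set bad := g.coeff.support.filter fun p => p ≠ s₀ ∧ p ∉ deltaSet d s
  rcases bad.eq_empty_or_nonempty with hbad | hbad
  · refine ⟨g, hg, hgs, fun p hp hps₀ => ?_⟩
    by_contra hpΔ
    exact Finset.eq_empty_iff_forall_notMem.1 hbad p (Finset.mem_filter.2 ⟨hp, hps₀, hpΔ⟩)
  obtain ⟨m, hm, hmax⟩ := T.exists_max hbad
  obtain ⟨hmg, hms₀, hmΔ⟩ := Finset.mem_filter.1 hm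
  obtain ⟨j, hj, hjm⟩ := hs.exists_le_of_notMem_deltaSet hmΔ
  obtain ⟨g₁, hg₁, hg₁s, hg₁supp⟩ := exists_eliminate T hg hgs (hf j hj).1 (hf j hj).2 hmg hms₀ hjm
  refine ih m (hbound m hmg hms₀ hmΔ) g₁ hg₁ hg₁s fun p hp hps₀ hpΔ => ?_
  obtain ⟨hpm, hpg | hplt⟩ := hg₁supp p hp
  · exact ⟨hmax p (Finset.mem_filter.2 ⟨hpg, hps₀, hpΔ⟩), hpm⟩
  · exact hplt

end Recurrence

theorem stmt_12_general (T : MonomialOrder2) {L : Type*} [Field L] (U : ℕ × ℕ → L)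
    (l : ℕ × ℕ) (d : ℕ) (s : ℕ → ℕ × ℕ) (f : ℕ → AddMonoidAlgebra L (ℕ × ℕ))
    (hmin : IsMinimalSet T U l d s f) :
    ∃ f' : ℕ → AddMonoidAlgebra L (ℕ × ℕ),
      IsMinimalSet T U l d s f' ∧
        ∀ i, i < d → ∀ m ∈ (f' i).coeff.support, m ≠ s i → m ∈ deltaSet d s := by
  obtain ⟨hs, hf, hΔ⟩ := hmin
  have hred : ∀ i < d, ∃ g ∈ Lambda T U l, IsLP T g (s i) ∧
      ∀ p ∈ g.coeff.support, p ≠ s i → p ∈ deltaSet d s := fun i hi =>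
    exists_reduced_of_forall_lt T hs hf (s i) (s i) (f i) (hf i hi).1 (hf i hi).2
      fun p hp hpi _ => ⟨(hf i hi).2.2 p hp, hpi⟩
  choose g hgΛ hgs hgΔ using hred
  refine ⟨fun i => if hi : i < d then g i hi else 0, ⟨hs, fun i hi => ?_, hΔ⟩, fun i hi => ?_⟩
  · simpa only [dif_pos hi] using ⟨hgΛ i hi, hgs i hi⟩
  · simpa only [dif_pos hi] using hgΔ i hi

/-- any minimal set of polynomials for `u^l` can be replaced by one in
normal form with the same leading exponents: every non-leading exponent of every
polynomial lies in the delta-set. -/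
theorem stmt_12 (T : MonomialOrder2) {L : Type*} [Field L] (r₁ r₂ : ℕ)
    (hr₁ : 0 < r₁) (hr₂ : 0 < r₂) (U : ℕ × ℕ → L) (hU : DoublyPeriodic r₁ r₂ U)
    (l : ℕ × ℕ) (d : ℕ) (s : ℕ → ℕ × ℕ) (f : ℕ → AddMonoidAlgebra L (ℕ × ℕ))
    (hmin : IsMinimalSet T U l d s f) :
    ∃ f' : ℕ → AddMonoidAlgebra L (ℕ × ℕ),
      IsMinimalSet T U l d s f' ∧
        ∀ i, i < d → ∀ m ∈ (f' i).coeff.support, m ≠ s i → m ∈ deltaSet d s :=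
  stmt_12_general T U l d s f hmin
end
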